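/- arXiv:2409.09033 — 5 statements merged into one kernel-verified Lean document; each statement's English description precedes it below -/
import Mathlib

section
/- Let F be a field, let m, q ∈ F with m ≠ 0 and q ≠ 0, and let n ≥ 1. Let M be the n×(n+1) matrix over F with M_{i,i} = m and M_{i,i+1} = m·q for i = 1,…,n, and all other entries zero (the generalized clockwork mass matrix). Then M has rank n, its kernel is one-dimensional, and the kernel is spanned by the vector Λ₀ ∈ F^{n+1} with components Λ₀(k) = (−q)^{n+2−k} for k = 1,…,n+1, i.e., Λ₀ = ((−q)^{n+1}, (−q)^n, …, (−q)^2, (−q)^1). -/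
/-- The generalized clockwork mass matrix (entries `m` on the main
diagonal and `m*q` on the superdiagonal of an `n × (n+1)` matrix, `m, q ≠ 0`) has
rank `n`, a one-dimensional kernel, and the kernel is spanned by the clockwork zero
mode `Λ₀` with components `Λ₀ k = (-q)^(n+2-k)` for `k = 1, …, n+1` (here the index
`k : Fin (n+1)` is `0`-based, so the exponent reads `n+1-k`). -/
theorem stmt_10 {F : Type*} [Field F] (m q : F) (hm : m ≠ 0) (hq : q ≠ 0)
    (n : ℕ) (hn : 1 ≤ n)
    (M : Matrix (Fin n) (Fin (n+1)) F)
    (hM : ∀ i j, M i j = if (j : ℕ) = (i : ℕ) then m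
        else if (j : ℕ) = (i : ℕ) + 1 then m * q else 0)
    (Λ₀ : Fin (n+1) → F) (hΛ : ∀ k, Λ₀ k = (-q) ^ (n + 1 - (k : ℕ))) :
    M.rank = n ∧
      Module.finrank F (LinearMap.ker M.mulVecLin) = 1 ∧
      LinearMap.ker M.mulVecLin = Submodule.span F {Λ₀} := by
  have hnq : (-q) ≠ 0 := neg_ne_zero.mpr hq
  -- mulVec formula
  have hmv : ∀ (v : Fin (n+1) → F) (i : Fin n),
      M.mulVec v i = m * v i.castSucc + m * q * v i.succ := by
    intro v i
    have hne : i.castSucc ≠ i.succ := by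
      simp [Fin.ext_iff]
    calc M.mulVec v i = ∑ j, M i j * v j := rfl
      _ = ∑ j, ((if j = i.castSucc then m * v j else 0)
            + (if j = i.succ then m * q * v j else 0)) := by
          apply Finset.sum_congr rfl
          intro j _
          rw [hM]
          rcases eq_or_ne j i.castSucc with hj | hj
          · subst hj
            simp [hne]
          · rcases eq_or_ne j i.succ with hj2 | hj2
            · subst hj2
              simp [hne.symm]
            · have h1 : ¬((j : ℕ) = (i : ℕ)) := fun h => hj (Fin.ext (by simpa using h))
              have h2 : ¬((j : ℕ) = (i : ℕ) + 1) := fun h => hj2 (Fin.ext (by simpa using h))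
              simp [h1, h2, hj, hj2]
      _ = m * v i.castSucc + m * q * v i.succ := by
          rw [Finset.sum_add_distrib, Finset.sum_ite_eq' Finset.univ i.castSucc,
            Finset.sum_ite_eq' Finset.univ i.succ]
          simp
  -- kernel characterization
  have hker : ∀ v, v ∈ LinearMap.ker M.mulVecLin ↔
      ∀ i : Fin n, v i.castSucc = -q * v i.succ := by
    intro v
    rw [LinearMap.mem_ker]
    constructor
    · intro h i
      have h0 : (M.mulVecLin v) i = 0 := by rw [h]; rfl
      rw [Matrix.mulVecLin_apply, hmv] at h0
      apply mul_left_cancel₀ hm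
      linear_combination h0
    · intro h
      funext i
      show M.mulVec v i = 0
      rw [hmv, h i]
      ring
  -- Λ₀ is in the kernel
  have hΛker : Λ₀ ∈ LinearMap.ker M.mulVecLin := by
    rw [hker]
    intro i
    have hi := i.isLt
    rw [hΛ, hΛ]
    have e1 : n + 1 - ((i.castSucc : Fin (n+1)) : ℕ) = (n + 1 - ((i.succ : Fin (n+1)) : ℕ)) + 1 := by
      simp only [Fin.coe_castSucc, Fin.val_succ]
      omega
    rw [e1, pow_succ]
    ring
  -- Λ₀ ≠ 0
  have hΛne : Λ₀ ≠ 0 := by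
    intro h0
    have := hΛ (Fin.last n)
    rw [h0] at this
    simp only [Fin.val_last, Pi.zero_apply] at this
    have e : n + 1 - n = 1 := by omega
    rw [e, pow_one] at this
    exact hnq this.symm
  -- span equality
  have hspan : LinearMap.ker M.mulVecLin = Submodule.span F {Λ₀} := by
    apply le_antisymm
    · intro v hv
      rw [Submodule.mem_span_singleton]
      refine ⟨v (Fin.last n) * (-q)⁻¹, ?_⟩
      have hrec := (hker v).1 hv
      have main : ∀ d, d ≤ n → v ⟨n - d, by omega⟩ = v (Fin.last n) * (-q) ^ d := by
        intro d
        induction d with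
        | zero =>
          intro _
          have : (⟨n - 0, by omega⟩ : Fin (n+1)) = Fin.last n := by
            apply Fin.ext; simp
          rw [this]; simp
        | succ d ih =>
          intro hd
          have hd' : d ≤ n := by omega
          set i : Fin n := ⟨n - (d+1), by omega⟩ with hi
          have hc : (⟨n - (d+1), by omega⟩ : Fin (n+1)) = i.castSucc := by
            apply Fin.ext; simp [hi]
          have hs : i.succ = (⟨n - d, by omega⟩ : Fin (n+1)) := by
            apply Fin.ext; simp [hi]; omega
          rw [hc, hrec i, hs, ih hd']
          ring
      have key : ∀ k : Fin (n+1), v k = v (Fin.last n) * (-q) ^ (n - (k : ℕ)) := by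
        intro k
        have hk := k.isLt
        have hkk : k = (⟨n - (n - (k : ℕ)), by omega⟩ : Fin (n+1)) := by
          apply Fin.ext; simp; omega
        conv_lhs => rw [hkk]
        exact main (n - (k : ℕ)) (by omega)
      funext k
      have hk := k.isLt
      rw [Pi.smul_apply, smul_eq_mul, hΛ, key k]
      have e : n + 1 - (k : ℕ) = (n - (k : ℕ)) + 1 := by omega
      rw [e, pow_succ]
      field_simp
    · rw [Submodule.span_le, Set.singleton_subset_iff]
      exact hΛker
  -- finrank of kernel
  have hfr : Module.finrank F (LinearMap.ker M.mulVecLin) = 1 := by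
    rw [hspan]
    exact finrank_span_singleton hΛne
  refine ⟨?_, hfr, hspan⟩
  have hrn := LinearMap.finrank_range_add_finrank_ker M.mulVecLin
  rw [hfr] at hrn
  have hdim : Module.finrank F (Fin (n+1) → F) = n + 1 := by
    simp
  rw [hdim] at hrn
  rw [Matrix.rank]
  omega
end

section
/- Let n ≥ 1 and let a₀, a₁, …, a_n be elements of a field F of characteristic zero with a₀ ≠ 0. Let A be the n×(n+1) matrix with A_{i,j} = a_{j−i} for all 1 ≤ i ≤ n, i ≤ j ≤ n+1, and A_{i,j} = 0 for j < i (the completely non-local clockwork mass matrix with uniform couplings). Define Λ₀ ∈ F^{n+1} by Λ₀(K) = Σ ((k₁+k₂+⋯+k_n)! / (k₁!·k₂!⋯k_n!)) · Π_{m=1}^{n} (−a_m/a₀)^{k_m}, where the sum runs over all tuples (k₁,…,k_n) of nonnegative integers satisfying k₁ + 2k₂ + ⋯ + n·k_n = n+1−K. Then A · Λ₀ = 0, Λ₀(n+1) = 1, and Λ₀ spans the (one-dimensional) kernel of A. -/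
/-!
Write `a(x) = ∑_{t ≤ n} a_t x^t = a₀ (1 - B(x))` with `B(x) = ∑_{m=1}^n (-a_m/a₀) x^m`. By the
multinomial theorem, `Λ₀(K)` is the coefficient of `x^(n+1-K)` in `∑_{p ≤ n} B(x)^p`, which agrees
with `a₀ / a(x)` up to order `n` because `B` has no constant term. Row `i` of `A Λ₀` is the
coefficient of `x^(n+1-i)` in `a(x) ∑_{p ≤ n} B(x)^p`, hence zero. The first `n` columns of `A`
form an upper triangular matrix with diagonal `a₀`, so `A` has rank `n` and its kernel is a line.
-/

open Finset PowerSeries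

theorem PowerSeries.coeff_one_sub_mul_geom_sum {R : Type*} [CommRing R] {B : R⟦X⟧}
    (hB : constantCoeff B = 0) {d N : ℕ} (hd : d < N) :
    coeff d ((1 - B) * ∑ p ∈ range N, B ^ p) = coeff d (1 : R⟦X⟧) := by
  have hBN : X ^ N ∣ B ^ N := pow_dvd_pow_of_dvd (X_dvd_iff.mpr hB) N
  rw [mul_neg_geom_sum, map_sub, X_pow_dvd_iff.mp hBN d hd, sub_zero]

theorem PowerSeries.coeff_sum_C_mul_X_pow_pow {R ι : Type*} [CommSemiring R] [DecidableEq ι]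
    (s : Finset ι) (c : ι → R) (w : ι → ℕ) (p d : ℕ) :
    coeff d ((∑ i ∈ s, C (c i) * X ^ w i) ^ p) =
      ∑ k ∈ piAntidiag s p with ∑ i ∈ s, w i * k i = d,
        (Nat.multinomial s k : R) * ∏ i ∈ s, c i ^ k i := by
  rw [sum_pow_eq_sum_piAntidiag, map_sum, sum_filter]
  refine sum_congr rfl fun k _ => ?_
  have hmonomial : ∏ i ∈ s, (C (c i) * X ^ w i) ^ k i =
      C (∏ i ∈ s, c i ^ k i) * X ^ ∑ i ∈ s, w i * k i := by
    simp only [mul_pow, prod_mul_distrib, map_prod, map_pow, ← pow_mul, prod_pow_eq_pow_sum]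
  rw [hmonomial, ← mul_assoc, ← map_natCast C, ← map_mul, coeff_C_mul_X_pow]
  split_ifs <;> first | rfl | omega

theorem Matrix.ker_mulVecLin_eq_span_singleton {K m ι : Type*} [Field K] [Fintype m] [Fintype ι]
    {A : Matrix m ι K} (hA : A.rank + 1 = Fintype.card ι) {v : ι → K} (hv : A.mulVec v = 0)
    (hv₀ : v ≠ 0) : LinearMap.ker A.mulVecLin = Submodule.span K {v} := by
  have hker : Module.finrank K (LinearMap.ker A.mulVecLin) = 1 := by
    have := LinearMap.finrank_range_add_finrank_ker A.mulVecLin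
    rw [Module.finrank_fintype_fun_eq_card, ← hA, ← Matrix.rank] at this
    omega
  refine (Submodule.eq_of_le_of_finrank_le ?_ ?_).symm
  · rwa [Submodule.span_singleton_le_iff_mem, LinearMap.mem_ker, Matrix.mulVecLin_apply]
  · rw [hker, finrank_span_singleton hv₀]

namespace Clockwork

variable {F : Type*} [Field F] {n : ℕ} {a : ℕ → F}

variable (n a) in
def massMatrix : Matrix (Fin n) (Fin (n + 1)) F :=
  Matrix.of fun i j => if (i : ℕ) ≤ j then a (j - i) else 0

variable (n a) in
noncomputable def couplingSeries : F⟦X⟧ := ∑ t ∈ range (n + 1), C (a t) * X ^ t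

variable (n a) in
noncomputable def tailSeries : F⟦X⟧ := ∑ m : Fin n, C (-a (m + 1) / a 0) * X ^ ((m : ℕ) + 1)

variable (n a) in
noncomputable def kernelSeries : F⟦X⟧ := ∑ p ∈ range (n + 1), tailSeries n a ^ p

theorem coeff_couplingSeries {t : ℕ} (ht : t ≤ n) : coeff t (couplingSeries n a) = a t := by
  simp [couplingSeries, Nat.lt_succ_iff.mpr ht]

theorem constantCoeff_tailSeries : constantCoeff (tailSeries n a) = 0 := by
  simp [tailSeries]

theorem couplingSeries_eq (ha : a 0 ≠ 0) :
    couplingSeries n a = C (a 0) * (1 - tailSeries n a) := by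
  have hterm (m : ℕ) : C (a 0) * (C (-a (m + 1) / a 0) * X ^ (m + 1)) =
      -(C (a (m + 1)) * X ^ (m + 1)) := by
    rw [← mul_assoc, ← map_mul, mul_div_cancel₀ _ ha, map_neg, neg_mul]
  rw [couplingSeries, sum_range_succ', tailSeries, mul_sub, mul_one, mul_sum,
    Fin.sum_univ_eq_sum_range (fun m => C (a 0) * (C (-a (m + 1) / a 0) * X ^ (m + 1))),
    sum_congr rfl fun m _ => hterm m, sum_neg_distrib, sub_neg_eq_add, pow_zero, mul_one,
    add_comm]

theorem coeff_couplingSeries_mul_kernelSeries (ha : a 0 ≠ 0) {d : ℕ} (hd₀ : d ≠ 0)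
    (hdn : d ≤ n) : coeff d (couplingSeries n a * kernelSeries n a) = 0 := by
  rw [couplingSeries_eq ha, mul_assoc, coeff_C_mul, kernelSeries,
    coeff_one_sub_mul_geom_sum constantCoeff_tailSeries (Nat.lt_succ_of_le hdn), coeff_one,
    if_neg hd₀, mul_zero]

theorem coeff_zero_kernelSeries : coeff 0 (kernelSeries n a) = 1 := by
  simp [kernelSeries, constantCoeff_tailSeries, sum_range_succ']

theorem sum_le_sum_succ_mul (k : Fin n → ℕ) : ∑ i, k i ≤ ∑ i : Fin n, ((i : ℕ) + 1) * k i :=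
  sum_le_sum fun i _ => Nat.le_mul_of_pos_left _ i.val.succ_pos

theorem coeff_kernelSeries {d : ℕ} (hd : d ≤ n) :
    coeff d (kernelSeries n a) =
      ∑ k ∈ univ.filter
          (fun k : Fin n → Fin (n + 2) => ∑ m : Fin n, ((m : ℕ) + 1) * (k m : ℕ) = d),
        (Nat.multinomial univ (fun m => (k m : ℕ)) : F) *
          ∏ m : Fin n, (-a ((m : ℕ) + 1) / a 0) ^ (k m : ℕ) := by
  rw [kernelSeries, map_sum, ← sum_fiberwise_of_maps_to
    (g := fun k : Fin n → Fin (n + 2) => ∑ m, (k m : ℕ)) (t := range (n + 1))]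
  · refine sum_congr rfl fun p _ => ?_
    rw [tailSeries, coeff_sum_C_mul_X_pow_pow]
    symm
    refine sum_nbij (fun k m => (k m : ℕ)) ?_ ?_ ?_ fun _ _ => rfl
    · intro k hk
      simp only [mem_filter, mem_univ, true_and] at hk
      simp [mem_piAntidiag, hk.1, hk.2]
    · intro k _ l _ hkl
      exact funext fun m => Fin.ext (congrFun hkl m)
    · intro k hk
      simp only [coe_filter, mem_piAntidiag, Set.mem_ofPred_eq] at hk
      refine ⟨fun m => ⟨k m, ?_⟩, ?_, rfl⟩
      · have := (single_le_sum (fun i _ => Nat.zero_le (k i)) (mem_univ m)).trans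
          (sum_le_sum_succ_mul k)
        omega
      · simp [hk.1.1, hk.2]
  · intro k hk
    simp only [mem_filter, mem_univ, true_and] at hk
    have := sum_le_sum_succ_mul fun m => (k m : ℕ)
    simp only [mem_range]
    omega

theorem massMatrix_mulVec_apply (φ : F⟦X⟧) (i : Fin n) :
    (massMatrix n a).mulVec (fun j => coeff (n - j) φ) i =
      coeff (n - i) (couplingSeries n a * φ) := by
  rw [coeff_mul, Nat.sum_antidiagonal_eq_sum_range_succ_mk]
  simp only [Matrix.mulVec, dotProduct, massMatrix, Matrix.of_apply, ite_mul, zero_mul]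
  rw [Fin.sum_univ_eq_sum_range (fun j => if (i : ℕ) ≤ j then a (j - i) * coeff (n - j) φ else 0),
    ← sum_filter]
  refine sum_nbij' (· - i) (i + ·) ?_ ?_ ?_ ?_ ?_
  · intro j hj
    simp only [mem_filter, mem_range] at hj ⊢
    omega
  · intro t ht
    simp only [mem_filter, mem_range] at ht ⊢
    omega
  · intro j hj
    simp only [mem_filter, mem_range] at hj
    omega
  · intro t _
    omega
  · intro j hj
    simp only [mem_filter, mem_range] at hj
    rw [coeff_couplingSeries (by omega), Nat.sub_sub, Nat.add_sub_cancel' hj.2]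

theorem rank_massMatrix (ha : a 0 ≠ 0) : (massMatrix n a).rank = n := by
  set M := (massMatrix n a).submatrix id Fin.castSucc
  have hM : M.IsUpperTriangular := fun i j hji => by
    have : (j : ℕ) < i := hji
    simp only [M, massMatrix, Matrix.submatrix_apply, Matrix.of_apply, id, Fin.val_castSucc]
    exact if_neg (by omega)
  have hdet : M.det = a 0 ^ n := by
    rw [Matrix.det_of_isUpperTriangular hM]
    simp [M, massMatrix]
  have hunit : IsUnit M := M.isUnit_iff_isUnit_det.mpr (hdet ▸ (pow_ne_zero n ha).isUnit)
  refine le_antisymm ?_ ?_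
  · simpa using Matrix.rank_le_card_height (massMatrix n a)
  · calc n = M.rank := by rw [Matrix.rank_of_isUnit M hunit, Fintype.card_fin]
      _ ≤ (massMatrix n a).rank := Matrix.rank_submatrix_le _ _ _

end Clockwork

open Clockwork in
theorem stmt_12_general {F : Type*} [Field F] (n : ℕ)
    (a : ℕ → F) (ha : a 0 ≠ 0)
    (A : Matrix (Fin n) (Fin (n+1)) F)
    (hA : ∀ i j, A i j =
      if (i : ℕ) ≤ (j : ℕ) then a ((j : ℕ) - (i : ℕ)) else 0)
    (Λ₀ : Fin (n+1) → F)
    (hΛ : ∀ K : Fin (n+1), Λ₀ K =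
      ∑ k ∈ Finset.univ.filter
          (fun k : Fin n → Fin (n+2) =>
            ∑ m : Fin n, ((m : ℕ) + 1) * ((k m : ℕ)) = n - (K : ℕ)),
        (Nat.multinomial Finset.univ (fun m => (k m : ℕ)) : F) *
          ∏ m : Fin n, (-(a ((m : ℕ) + 1)) / a 0) ^ ((k m : ℕ))) :
    A.mulVec Λ₀ = 0 ∧ Λ₀ (Fin.last n) = 1 ∧
      LinearMap.ker A.mulVecLin = Submodule.span F {Λ₀} := by
  obtain rfl : A = massMatrix n a := Matrix.ext hA
  obtain rfl : Λ₀ = fun K : Fin (n + 1) => coeff (n - K) (kernelSeries n a) :=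
    funext fun K => by rw [hΛ, coeff_kernelSeries (Nat.sub_le n K)]
  have hmulVec :
      (massMatrix n a).mulVec (fun K : Fin (n + 1) => coeff (n - K) (kernelSeries n a)) = 0 :=
    funext fun i => by
      rw [massMatrix_mulVec_apply,
        coeff_couplingSeries_mul_kernelSeries ha (by omega) (Nat.sub_le n i), Pi.zero_apply]
  have hlast : coeff (n - Fin.last n) (kernelSeries n a) = 1 := by
    rw [Fin.val_last, Nat.sub_self, coeff_zero_kernelSeries]
  refine ⟨hmulVec, hlast, Matrix.ker_mulVecLin_eq_span_singleton ?_ hmulVec ?_⟩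
  · rw [rank_massMatrix ha, Fintype.card_fin]
  · exact fun h => one_ne_zero (hlast.symm.trans (congrFun h (Fin.last n)))

/-- The completely non-local clockwork mass matrix with uniform
couplings (`A i j = a (j-i)` for `j ≥ i`, `0` otherwise, with `a 0 ≠ 0`) over a field
of characteristic zero has a one-dimensional kernel spanned by `Λ₀`, where the
`K`-th component (`1`-based) is the multinomial sum
`Λ₀ K = ∑ (k₁+⋯+kₙ)!/(k₁!⋯kₙ!) ∏ₘ (-aₘ/a₀)^(kₘ)` over tuples of nonnegative
integers with `k₁ + 2k₂ + ⋯ + n·kₙ = n+1-K`; moreover `A ⬝ᵥ Λ₀ = 0` and the last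
component of `Λ₀` equals `1`. (Each `kₘ` in a contributing tuple is at most `n+1`,
so the tuples are faithfully enumerated by `Fin n → Fin (n+2)`.) -/
theorem stmt_12 {F : Type*} [Field F] [CharZero F] (n : ℕ) (hn : 1 ≤ n)
    (a : ℕ → F) (ha : a 0 ≠ 0)
    (A : Matrix (Fin n) (Fin (n+1)) F)
    (hA : ∀ i j, A i j =
      if (i : ℕ) ≤ (j : ℕ) then a ((j : ℕ) - (i : ℕ)) else 0)
    (Λ₀ : Fin (n+1) → F)
    (hΛ : ∀ K : Fin (n+1), Λ₀ K =
      ∑ k ∈ Finset.univ.filter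
          (fun k : Fin n → Fin (n+2) =>
            ∑ m : Fin n, ((m : ℕ) + 1) * ((k m : ℕ)) = n - (K : ℕ)),
        (Nat.multinomial Finset.univ (fun m => (k m : ℕ)) : F) *
          ∏ m : Fin n, (-(a ((m : ℕ) + 1)) / a 0) ^ ((k m : ℕ))) :
    A.mulVec Λ₀ = 0 ∧ Λ₀ (Fin.last n) = 1 ∧
      LinearMap.ker A.mulVecLin = Submodule.span F {Λ₀} :=
  stmt_12_general n a ha A hA Λ₀ hΛ
end

section
/- Let m be a nonzero real number and n ≥ 1, and let H be the n×n symmetric tridiagonal matrix with H_{ij} = m if |i−j| ≤ 1 and H_{ij} = 0 otherwise. Then H is singular (has a nontrivial kernel) if and only if n ≡ 2 (mod 3). -/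
noncomputable def g13 : ℕ → ℝ := fun k => if k % 3 = 0 then 1 else if k % 3 = 1 then -1 else 0

lemma g13_sum (k : ℕ) : g13 k + g13 (k+1) + g13 (k+2) = 0 := by
  have h : k % 3 = 0 ∨ k % 3 = 1 ∨ k % 3 = 2 := by omega
  rcases h with h | h | h <;>
    simp [g13, h, Nat.add_mod] 

lemma sum3 (f : ℕ → ℝ) (a : ℕ) : ∑ k ∈ Finset.Ico a (a+3), f k = f a + f (a+1) + f (a+2) := by
  rw [show a + 3 = (a+2)+1 by ring, Finset.sum_Ico_succ_top (by omega),
     show a + 2 = (a+1)+1 by ring, Finset.sum_Ico_succ_top (by omega),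
     Finset.sum_Ico_succ_top (by omega)]
  simp

lemma sum2 (f : ℕ → ℝ) : ∑ k ∈ Finset.Ico 0 2, f k = f 0 + f 1 := by
  rw [show (2:ℕ) = 1+1 from rfl, Finset.sum_Ico_succ_top (by omega), Finset.sum_Ico_succ_top (by omega)]
  simp

lemma keylem (m : ℝ) (n : ℕ) (H : Matrix (Fin n) (Fin n) ℝ)
    (hH : ∀ i j, H i j =
      if (((i : ℕ) : ℤ) - ((j : ℕ) : ℤ)).natAbs ≤ 1 then m else 0)
    (v : Fin n → ℝ) (i : Fin n) :
    H.mulVec v i = m * ∑ k ∈ Finset.Ico ((i:ℕ) - 1) ((i:ℕ) + 2),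
      (if h : k < n then v ⟨k, h⟩ else 0) := by
  classical
  set w : ℕ → ℝ := fun k => if h : k < n then v ⟨k, h⟩ else 0 with hw
  have h1 : H.mulVec v i = ∑ k ∈ Finset.range n,
      (if (((i:ℕ):ℤ) - (k:ℤ)).natAbs ≤ 1 then m else 0) * w k := by
    rw [← Fin.sum_univ_eq_sum_range (fun k => (if (((i:ℕ):ℤ) - (k:ℤ)).natAbs ≤ 1 then m else 0) * w k) n]
    simp only [Matrix.mulVec, dotProduct]
    refine Finset.sum_congr rfl fun j _ => ?_
    rw [hH]
    simp [hw, j.2]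
  rw [h1]
  have h2 : ∀ k : ℕ, ((if (((i:ℕ):ℤ) - (k:ℤ)).natAbs ≤ 1 then m else 0) * w k)
      = if k ∈ Finset.Ico ((i:ℕ) - 1) ((i:ℕ) + 2) then m * w k else 0 := by
    intro k
    have : (((i:ℕ):ℤ) - (k:ℤ)).natAbs ≤ 1 ↔ ((i:ℕ) - 1 ≤ k ∧ k < (i:ℕ) + 2) := by omega
    by_cases hk : (((i:ℕ):ℤ) - (k:ℤ)).natAbs ≤ 1
    · rw [if_pos hk, if_pos (Finset.mem_Ico.mpr (this.mp hk))]
    · rw [if_neg hk, if_neg (fun hmem => hk (this.mpr (Finset.mem_Ico.mp hmem))), zero_mul]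
  simp_rw [h2]
  rw [Finset.sum_ite_mem, Finset.mul_sum]
  refine Finset.sum_subset (Finset.inter_subset_right) fun x _ hx => ?_
  have : ¬ x < n := by
    intro hxn
    exact hx (Finset.mem_inter.mpr ⟨Finset.mem_range.mpr hxn, ‹x ∈ _›⟩)
  simp [hw, this]

/-- The local theory-space (deconstruction) Hamiltonian — the
`n × n` symmetric tridiagonal matrix with `m ≠ 0` on the diagonal, subdiagonal and
superdiagonal — is singular (has a nontrivial kernel) iff `n ≡ 2 (mod 3)`. -/
theorem stmt_13 (m : ℝ) (hm : m ≠ 0) (n : ℕ) (hn : 1 ≤ n)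
    (H : Matrix (Fin n) (Fin n) ℝ)
    (hH : ∀ i j, H i j =
      if (((i : ℕ) : ℤ) - ((j : ℕ) : ℤ)).natAbs ≤ 1 then m else 0) :
    LinearMap.ker H.mulVecLin ≠ ⊥ ↔ n % 3 = 2 := by
  classical
  have hker : (LinearMap.ker H.mulVecLin ≠ ⊥) ↔
      ∃ v : Fin n → ℝ, v ≠ 0 ∧ H.mulVec v = 0 := by
    rw [Submodule.ne_bot_iff]
    constructor
    · rintro ⟨v, hv, hv0⟩
      exact ⟨v, hv0, by simpa using hv⟩
    · rintro ⟨v, hv0, hv⟩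
      exact ⟨v, by simpa using hv, hv0⟩
  rw [hker]
  constructor
  · rintro ⟨v, hv0, hveq⟩
    by_contra hn2
    set w : ℕ → ℝ := fun k => if h : k < n then v ⟨k, h⟩ else 0 with hw
    have E : ∀ i : ℕ, i < n → ∑ k ∈ Finset.Ico (i - 1) (i + 2), w k = 0 := by
      intro i hi
      have h0 : H.mulVec v ⟨i, hi⟩ = 0 := by rw [hveq]; rfl
      rw [keylem m n H hH v ⟨i, hi⟩] at h0
      exact (mul_eq_zero.mp h0).resolve_left hm
    -- w k = g13 k * w 0
    have key2 : ∀ k, k < n → w k = g13 k * w 0 := by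
      intro k
      induction k using Nat.strong_induction_on with
      | _ k ih =>
        intro hk
        match k with
        | 0 => simp [g13]
        | 1 =>
          have e0 := E 0 hn
          rw [sum2] at e0
          have : w 1 = - w 0 := by linarith
          rw [this]; simp [g13]
        | (k+2) =>
          have e := E (k+1) (by omega)
          have heq : (k+1) - 1 = k := by omega
          rw [heq, sum3] at e
          have h1 := ih k (by omega) (by omega)
          have h2 := ih (k+1) (by omega) (by omega)
          have hg := g13_sum k
          rw [h1, h2] at e
          have hg2 : g13 (k+2) = -(g13 k + g13 (k+1)) := by linarith
          rw [hg2]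
          linear_combination e
    -- final equation
    have hW0 : w 0 = 0 := by
      rcases Nat.lt_or_ge n 2 with h2 | h2
      · -- n = 1
        have hn1 : n = 1 := by omega
        have e0 := E 0 hn
        rw [sum2] at e0
        have : w 1 = 0 := by simp [hw, hn1]
        linarith
      · have e := E (n-1) (by omega)
        have heq1 : (n-1) - 1 = n - 2 := by omega
        have heq2 : (n-1) + 2 = (n-2) + 3 := by omega
        rw [heq1, heq2, sum3] at e
        have hwn : w ((n-2)+2) = 0 := by
          have : ¬ ((n-2)+2 < n) := by omega
          simp [hw, this]
        have ha := key2 (n-2) (by omega)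
        have hb := key2 ((n-2)+1) (by omega)
        rw [hwn, ha, hb] at e
        have hcoef : g13 (n-2) + g13 ((n-2)+1) ≠ 0 := by
          have h3 : n % 3 = 0 ∨ n % 3 = 1 := by omega
          rcases h3 with h3 | h3
          · have : (n-2) % 3 = 1 := by omega
            have h' : ((n-2)+1) % 3 = 2 := by omega
            simp [g13, this, h']
          · have : (n-2) % 3 = 2 := by omega
            have h' : ((n-2)+1) % 3 = 0 := by omega
            simp [g13, this, h']
        have : (g13 (n-2) + g13 ((n-2)+1)) * w 0 = 0 := by ring_nf; ring_nf at e; linarith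
        exact (mul_eq_zero.mp this).resolve_left hcoef
    apply hv0
    funext j
    have hval : v j = 0 := by
      have hj : v j = w (j:ℕ) := by simp [hw, j.2]
      rw [hj, key2 (j:ℕ) j.2, hW0, mul_zero]
    simpa using hval
  · intro h2
    refine ⟨fun i => g13 (i:ℕ), ?_, ?_⟩
    · intro h0
      have := congrFun h0 ⟨0, hn⟩
      simp [g13] at this
    · funext i
      rw [keylem m n H hH]
      simp only [Pi.zero_apply]
      have hn2 : 2 ≤ n := by omega
      rcases Nat.eq_zero_or_pos (i:ℕ) with h0 | hpos
      · rw [h0, show (0:ℕ)-1 = 0 from rfl, show (0:ℕ)+2 = 2 from rfl, sum2,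
          dif_pos (show (0:ℕ) < n by omega), dif_pos (show (1:ℕ) < n by omega)]
        simp [g13]
      · have heq : (i:ℕ) + 2 = ((i:ℕ)-1) + 3 := by omega
        rw [heq, sum3]
        rcases Nat.lt_or_ge ((i:ℕ)+1) n with hc | hc
        · rw [dif_pos (show (i:ℕ)-1 < n by omega), dif_pos (show (i:ℕ)-1+1 < n by omega),
            dif_pos (show (i:ℕ)-1+2 < n by omega)]
          have hs := g13_sum ((i:ℕ)-1)
          have h1 : (i:ℕ)-1+1 < n := by omega
          rw [hs, mul_zero]
        · have hi : (i:ℕ) = n - 1 := by have := i.2; omega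
          rw [dif_pos (show (i:ℕ)-1 < n by omega), dif_pos (show (i:ℕ)-1+1 < n by omega),
            dif_neg (show ¬ ((i:ℕ)-1+2 < n) by omega)]
          have g1 : g13 ((i:ℕ)-1) = 1 := by
            have hmod : ((i:ℕ)-1) % 3 = 0 := by omega
            simp [g13, hmod]
          have g2 : g13 ((i:ℕ)-1+1) = -1 := by
            have hmod : ((i:ℕ)-1+1) % 3 = 1 := by omega
            simp [g13, hmod]
          rw [g1, g2]; ring
end

section
/- Let m be a nonzero real number and let n ≥ 2 satisfy n ≡ 2 (mod 3). Let H be the n×n symmetric tridiagonal matrix with H_{ij} = m if |i−j| ≤ 1 and H_{ij} = 0 otherwise. Then the kernel of H is one-dimensional and is spanned by the vector v ∈ ℝ^n with components v_k = −1 if k ≡ 1 (mod 3), v_k = 1 if k ≡ 2 (mod 3), and v_k = 0 if k ≡ 0 (mod 3). -/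
/-- For `n ≡ 2 (mod 3)`, the kernel of the local theory-space
Hamiltonian (the `n × n` symmetric tridiagonal matrix with `m ≠ 0` on the diagonal,
subdiagonal and superdiagonal) is one-dimensional and spanned by the vector with
(`1`-based) components `-1, 1, 0` according as `k ≡ 1, 2, 0 (mod 3)`. -/
theorem stmt_14 (m : ℝ) (hm : m ≠ 0) (n : ℕ) (hn : 2 ≤ n) (hmod : n % 3 = 2)
    (H : Matrix (Fin n) (Fin n) ℝ)
    (hH : ∀ i j, H i j =
      if (((i : ℕ) : ℤ) - ((j : ℕ) : ℤ)).natAbs ≤ 1 then m else 0)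
    (v : Fin n → ℝ)
    (hv : ∀ k, v k =
      if ((k : ℕ) + 1) % 3 = 1 then -1
      else if ((k : ℕ) + 1) % 3 = 2 then 1 else 0) :
    Module.finrank ℝ (LinearMap.ker H.mulVecLin) = 1 ∧
      LinearMap.ker H.mulVecLin = Submodule.span ℝ {v} := by
  have hn0 : 0 < n := by omega
  -- key formula for the matrix-vector product at the k-th entry
  have key : ∀ (w : Fin n → ℝ) (k : ℕ) (hk : k < n),
      H.mulVec w ⟨k, hk⟩ = m * ((if h : 0 < k then w ⟨k - 1, by omega⟩ else 0)
        + w ⟨k, hk⟩ + (if h : k + 1 < n then w ⟨k + 1, h⟩ else 0)) := by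
    intro w k hk
    have h1 : H.mulVec w ⟨k, hk⟩ = ∑ j : Fin n,
        (if ((k : ℤ) - ((j : ℕ) : ℤ)).natAbs ≤ 1 then m * w j else 0) := by
      simp only [Matrix.mulVec, dotProduct, hH]
      refine Finset.sum_congr rfl fun j _ => ?_
      split <;> simp
    rw [h1, ← Finset.sum_filter]
    by_cases h0 : 0 < k
    · by_cases hlt : k + 1 < n
      · have hset : (Finset.univ.filter
            fun j : Fin n => ((k : ℤ) - ((j : ℕ) : ℤ)).natAbs ≤ 1)
            = {⟨k - 1, by omega⟩, ⟨k, hk⟩, ⟨k + 1, hlt⟩} := by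
          ext j
          have hj := j.isLt
          simp only [Finset.mem_filter, Finset.mem_univ, true_and,
            Finset.mem_insert, Finset.mem_singleton, Fin.ext_iff]
          omega
        rw [hset, Finset.sum_insert (by simp only [Finset.mem_insert, Finset.mem_singleton, Fin.ext_iff]; omega),
            Finset.sum_insert (by simp only [Finset.mem_insert, Finset.mem_singleton, Fin.ext_iff]; omega),
            Finset.sum_singleton, dif_pos h0, dif_pos hlt]
        ring
      · have hset : (Finset.univ.filter
            fun j : Fin n => ((k : ℤ) - ((j : ℕ) : ℤ)).natAbs ≤ 1)
            = {⟨k - 1, by omega⟩, ⟨k, hk⟩} := by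
          ext j
          have hj := j.isLt
          simp only [Finset.mem_filter, Finset.mem_univ, true_and,
            Finset.mem_insert, Finset.mem_singleton, Fin.ext_iff]
          omega
        rw [hset, Finset.sum_insert (by simp only [Finset.mem_insert, Finset.mem_singleton, Fin.ext_iff]; omega),
            Finset.sum_singleton, dif_pos h0, dif_neg hlt]
        ring
    · have hk0 : k = 0 := by omega
      subst hk0
      have hlt : 0 + 1 < n := by omega
      have hset : (Finset.univ.filter
          fun j : Fin n => (((0 : ℕ) : ℤ) - ((j : ℕ) : ℤ)).natAbs ≤ 1)
          = {⟨0, hk⟩, ⟨0 + 1, hlt⟩} := by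
        ext j
        have hj := j.isLt
        simp only [Finset.mem_filter, Finset.mem_univ, true_and,
          Finset.mem_insert, Finset.mem_singleton, Fin.ext_iff]
        omega
      rw [hset, Finset.sum_insert (by simp only [Finset.mem_singleton, Fin.ext_iff]; omega),
          Finset.sum_singleton, dif_neg h0, dif_pos hlt]
      ring
  -- membership in kernel characterization
  have hker_iff : ∀ w : Fin n → ℝ, H.mulVec w = 0 ↔ ∀ (k : ℕ) (hk : k < n),
      (if h : 0 < k then w ⟨k - 1, by omega⟩ else 0) + w ⟨k, hk⟩
        + (if h : k + 1 < n then w ⟨k + 1, h⟩ else 0) = 0 := by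
    intro w
    constructor
    · intro hw k hk
      have h := congrFun hw ⟨k, hk⟩
      rw [key w k hk] at h
      simpa [hm] using h
    · intro hw
      funext i
      obtain ⟨k, hk⟩ := i
      rw [key w k hk, hw k hk, mul_zero]
      rfl
  -- v is in the kernel
  have hvker : H.mulVec v = 0 := by
    rw [hker_iff]
    intro k hk
    simp only [hv]
    split_ifs <;> first | (exfalso; omega) | norm_num
  -- every kernel element is a multiple of v
  have hspan : ∀ x : Fin n → ℝ, H.mulVec x = 0 → x = (- x ⟨0, hn0⟩) • v := by
    intro x hx0
    have hx := (hker_iff x).mp hx0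
    have estep : ∀ (k : ℕ) (hk : k + 2 < n),
        x ⟨k, by omega⟩ + x ⟨k + 1, by omega⟩ + x ⟨k + 2, hk⟩ = 0 := by
      intro k hk
      have h := hx (k + 1) (by omega)
      rwa [dif_pos (Nat.succ_pos k), dif_pos (show k + 1 + 1 < n from hk)] at h
    have e0 : x ⟨0, hn0⟩ + x ⟨1, by omega⟩ = 0 := by
      have h := hx 0 hn0
      rw [dif_neg (lt_irrefl 0), dif_pos (show 0 + 1 < n by omega)] at h
      linarith [h]
    have hrec : ∀ (k : ℕ) (hk : k < n), x ⟨k, hk⟩ = (- x ⟨0, hn0⟩) * v ⟨k, hk⟩ := by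
      intro k
      induction k using Nat.strong_induction_on with
      | _ k ih =>
        intro hk
        match k, ih, hk with
        | 0, ih, hk =>
          rw [hv]
          norm_num
        | 1, ih, hk =>
          rw [hv]
          norm_num
          linarith [e0]
        | (k + 2), ih, hk =>
          have h0 := ih k (by omega) (by omega)
          have h1 := ih (k + 1) (by omega) (by omega)
          have hs := estep k hk
          rw [h0, h1] at hs
          have hvrel : v ⟨k + 2, hk⟩ = -(v ⟨k, by omega⟩ + v ⟨k + 1, by omega⟩) := by
            simp only [hv]
            have h3 : k % 3 = 0 ∨ k % 3 = 1 ∨ k % 3 = 2 := by omega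
            split_ifs <;> first | (exfalso; omega) | norm_num
          rw [hvrel]
          linear_combination hs
    funext i
    obtain ⟨k, hk⟩ := i
    rw [Pi.smul_apply, smul_eq_mul]
    exact hrec k hk
  -- the kernel equals the span
  have hker : LinearMap.ker H.mulVecLin = Submodule.span ℝ {v} := by
    apply le_antisymm
    · intro x hx
      rw [LinearMap.mem_ker, Matrix.mulVecLin_apply] at hx
      rw [Submodule.mem_span_singleton]
      exact ⟨- x ⟨0, hn0⟩, (hspan x hx).symm⟩
    · rw [Submodule.span_le, Set.singleton_subset_iff]
      rw [SetLike.mem_coe, LinearMap.mem_ker, Matrix.mulVecLin_apply]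
      exact hvker
  have hv0 : v ≠ 0 := by
    intro h
    have h2 := congrFun h ⟨0, hn0⟩
    rw [hv] at h2
    norm_num at h2
  refine ⟨?_, hker⟩
  rw [hker, finrank_span_singleton hv0]
end

section
/- Let M_f be a nonzero real number and N ≥ 1. Let M be the (N+1)×N real matrix with M_{i,i} = M_f for i = 1,…,N, M_{i+1,i} = −M_f for i = 1,…,N, and all other entries zero. Then the eigenvalues of MᵀM are exactly 4·M_f²·sin²(kπ/(2(N+1))) for k = 1, 2, …, N; equivalently, the singular values of M (the fermion Kaluza–Klein masses) are 2·|M_f|·sin(kπ/(2(N+1))), k = 1,…,N. -/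
open Matrix Polynomial

/-- Sum of an indicator over `Fin n`. -/
lemma aux_sum_ite_eq {n : ℕ} (c : ℕ) (f : Fin n → ℝ) :
    (∑ x : Fin n, if (x : ℕ) = c then f x else 0)
      = if h : c < n then f ⟨c, h⟩ else 0 := by
  split_ifs with h
  · rw [Finset.sum_eq_single_of_mem ⟨c, h⟩ (Finset.mem_univ _)
      (fun x _ hx => if_neg fun he => hx (Fin.ext he)), if_pos rfl]
  · refine Finset.sum_eq_zero fun x _ => if_neg fun he => h ?_
    have := x.isLt
    omega

/-- Sum of a shifted indicator over `Fin n`. -/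
lemma aux_sum_ite_eq' {n : ℕ} (c : ℕ) (f : Fin n → ℝ) :
    (∑ x : Fin n, if (x : ℕ) + 1 = c then f x else 0)
      = if h : c - 1 < n ∧ 1 ≤ c then f ⟨c - 1, h.1⟩ else 0 := by
  split_ifs with h
  · rw [Finset.sum_eq_single_of_mem ⟨c - 1, h.1⟩ (Finset.mem_univ _)
      (fun x _ hx => if_neg fun he => hx (Fin.ext (by simp only [Fin.val_mk]; omega))),
      if_pos (by simp only [Fin.val_mk]; omega)]
  · refine Finset.sum_eq_zero fun x _ => if_neg fun he => ?_
    have := x.isLt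
    omega

/-- Chebyshev-type recurrence for sines. -/
lemma aux_trig_rec (θ a : ℝ) :
    2 * Real.sin (a * θ) - Real.sin ((a - 1) * θ) - Real.sin ((a + 1) * θ)
      = Real.sin (a * θ) * (2 * (1 - Real.cos θ)) := by
  have h1 : (a - 1) * θ = a * θ - θ := by ring
  have h2 : (a + 1) * θ = a * θ + θ := by ring
  rw [h1, h2, Real.sin_sub, Real.sin_add]; ring

/-- A root of the characteristic polynomial from an explicit eigenvector. -/
lemma aux_charpoly_root {n : ℕ} (A : Matrix (Fin n) (Fin n) ℝ) (t : ℝ)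
    (v : Fin n → ℝ) (hv : v ≠ 0) (hAv : A.mulVec v = t • v) :
    A.charpoly.IsRoot t := by
  have h1 : A.charpoly.eval t = ((A.charmatrix).map (Polynomial.evalRingHom t)).det := by
    rw [Matrix.charpoly, ← RingHom.mapMatrix_apply, ← RingHom.map_det]; rfl
  have h2 : (A.charmatrix).map (Polynomial.evalRingHom t)
      = Matrix.diagonal (fun _ => t) - A := by
    ext i j
    by_cases h : i = j <;>
      simp [Matrix.charmatrix_apply, Matrix.diagonal_apply, h, Matrix.map_apply]
  rw [Polynomial.IsRoot, h1, h2, ← Matrix.exists_mulVec_eq_zero_iff]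
  refine ⟨v, hv, ?_⟩
  rw [Matrix.sub_mulVec, hAv]
  funext i
  simp [Matrix.mulVec_diagonal]

/-- A monic polynomial of degree `n` with `n` distinct roots is the product of the
corresponding linear factors. -/
lemma aux_monic_eq_prod {n : ℕ} (p : Polynomial ℝ) (hm : p.Monic)
    (hdeg : p.natDegree = n) (r : Fin n → ℝ) (hinj : Function.Injective r)
    (hroot : ∀ k, p.IsRoot (r k)) : p = ∏ k : Fin n, (X - C (r k)) := by
  have hdvd : (∏ k : Fin n, (X - C (r k))) ∣ p := by
    refine Finset.prod_dvd_of_coprime ?_ fun k _ => (dvd_iff_isRoot).2 (hroot k)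
    intro i _ j _ hij
    exact Polynomial.pairwise_coprime_X_sub_C hinj hij
  have hq : (∏ k : Fin n, (X - C (r k))).Monic :=
    monic_prod_of_monic _ _ fun k _ => monic_X_sub_C _
  have hqd : (∏ k : Fin n, (X - C (r k))).natDegree = n := by
    rw [Polynomial.natDegree_prod _ _ fun k _ => X_sub_C_ne_zero _]
    simp
  obtain ⟨c, hc⟩ := hdvd
  have hc0 : c ≠ 0 := by
    rintro rfl
    rw [mul_zero] at hc
    exact hm.ne_zero hc
  have hcd : c.natDegree = 0 := by
    have := Polynomial.natDegree_mul hq.ne_zero hc0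
    rw [← hc, hdeg, hqd] at this
    omega
  have hcl : c.coeff 0 = 1 := by
    have h := hm.leadingCoeff
    rw [hc, Polynomial.leadingCoeff_mul, hq.leadingCoeff, one_mul] at h
    rwa [Polynomial.leadingCoeff, hcd] at h
  rw [hc, Polynomial.eq_C_of_natDegree_eq_zero hcd, hcl, Polynomial.C_1, mul_one]

/-- For the `(N+1) × N` bidiagonal deconstruction mass matrix `M`
with `M_f ≠ 0` on the main diagonal and `-M_f` on the subdiagonal, the eigenvalues
of `Mᵀ * M` are exactly `4 M_f² sin²(kπ/(2(N+1)))` for `k = 1, …, N` (stated with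
multiplicity via the characteristic polynomial); equivalently, the singular values
of `M` — the fermion Kaluza–Klein masses — are `2|M_f| sin(kπ/(2(N+1)))`, i.e. the
eigenvalues of `Mᵀ * M` are the squares `(2|M_f| sin(kπ/(2(N+1))))²`. -/
theorem stmt_18 (Mf : ℝ) (hMf : Mf ≠ 0) (N : ℕ) (hN : 1 ≤ N)
    (M : Matrix (Fin (N+1)) (Fin N) ℝ)
    (hM : ∀ i j, M i j =
      if (i : ℕ) = (j : ℕ) then Mf
      else if (i : ℕ) = (j : ℕ) + 1 then -Mf else 0) :
    (Mᵀ * M).charpoly = (∏ k : Fin N,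
        (X - C (4 * Mf ^ 2 *
          Real.sin (((k : ℕ) + 1) * Real.pi / (2 * ((N : ℝ) + 1))) ^ 2))) ∧
      (Mᵀ * M).charpoly = (∏ k : Fin N,
        (X - C ((2 * |Mf| *
          Real.sin (((k : ℕ) + 1) * Real.pi / (2 * ((N : ℝ) + 1)))) ^ 2))) := by
  have hNpos : (0 : ℝ) < (N : ℝ) + 1 := by positivity
  have hpi := Real.pi_pos
  set r : Fin N → ℝ := fun k =>
    4 * Mf ^ 2 * Real.sin (((k : ℕ) + 1) * Real.pi / (2 * ((N : ℝ) + 1))) ^ 2 with hr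
  -- the half-angles are in (0, π/2]
  have hφmem : ∀ k : Fin N,
      (0 < ((k : ℕ) + 1) * Real.pi / (2 * ((N : ℝ) + 1)) ∧
        ((k : ℕ) + 1) * Real.pi / (2 * ((N : ℝ) + 1)) ≤ Real.pi / 2) := by
    intro k
    constructor
    · positivity
    · rw [div_le_div_iff₀ (by positivity) (by norm_num)]
      have hk : ((k : ℕ) : ℝ) + 1 ≤ (N : ℝ) := by
        have := k.isLt
        exact_mod_cast this
      nlinarith
  -- injectivity of the eigenvalue list
  have hinj : Function.Injective r := by
    intro k1 k2 h
    have h4 : (4 : ℝ) * Mf ^ 2 ≠ 0 := by positivity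
    rw [hr] at h
    simp only at h
    have hs : Real.sin (((k1 : ℕ) + 1) * Real.pi / (2 * ((N : ℝ) + 1))) ^ 2
        = Real.sin (((k2 : ℕ) + 1) * Real.pi / (2 * ((N : ℝ) + 1))) ^ 2 :=
      mul_left_cancel₀ h4 h
    have hnn : ∀ k : Fin N,
        0 ≤ Real.sin (((k : ℕ) + 1) * Real.pi / (2 * ((N : ℝ) + 1))) := by
      intro k
      refine Real.sin_nonneg_of_nonneg_of_le_pi (le_of_lt (hφmem k).1) ?_
      linarith [(hφmem k).2]
    have habs : Real.sin (((k1 : ℕ) + 1) * Real.pi / (2 * ((N : ℝ) + 1)))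
        = Real.sin (((k2 : ℕ) + 1) * Real.pi / (2 * ((N : ℝ) + 1))) := by
      have := congrArg Real.sqrt hs
      rwa [Real.sqrt_sq (hnn k1), Real.sqrt_sq (hnn k2)] at this
    have hmem : ∀ k : Fin N,
        ((k : ℕ) + 1) * Real.pi / (2 * ((N : ℝ) + 1)) ∈
          Set.Icc (-(Real.pi / 2)) (Real.pi / 2) := by
      intro k
      exact ⟨by linarith [(hφmem k).1], (hφmem k).2⟩
    have heq := Real.injOn_sin (hmem k1) (hmem k2) habs
    rw [mul_div_assoc, mul_div_assoc] at heq
    have h1 := mul_right_cancel₀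
      (by positivity : Real.pi / (2 * ((N : ℝ) + 1)) ≠ 0) heq
    have : ((k1 : ℕ) : ℝ) = ((k2 : ℕ) : ℝ) := by linarith
    exact Fin.ext (by exact_mod_cast this)
  -- each r k is a root of the characteristic polynomial
  have hroots : ∀ k : Fin N, (Mᵀ * M).charpoly.IsRoot (r k) := by
    intro k
    set θ : ℝ := (((k : ℕ) : ℝ) + 1) * Real.pi / ((N : ℝ) + 1) with hθ
    -- r k = 2 Mf² (1 - cos θ)
    have hr_eq : r k = 2 * Mf ^ 2 * (1 - Real.cos θ) := by
      have h2 : (((k : ℕ) : ℝ) + 1) * Real.pi / (2 * ((N : ℝ) + 1)) = θ / 2 := by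
        rw [hθ, div_div, mul_comm ((N : ℝ) + 1) 2]
      have hcos : Real.cos θ = 1 - 2 * Real.sin (θ / 2) ^ 2 := by
        have h4 := Real.cos_two_mul' (θ / 2)
        rw [show 2 * (θ / 2) = θ by ring] at h4
        have h5 := Real.sin_sq_add_cos_sq (θ / 2)
        linarith
      have hrk : r k = 4 * Mf ^ 2 *
          Real.sin ((((k : ℕ) : ℝ) + 1) * Real.pi / (2 * ((N : ℝ) + 1))) ^ 2 := rfl
      rw [hrk, h2, hcos]
      ring
    -- the eigenvector
    set v : Fin N → ℝ := fun j => Real.sin ((((j : ℕ) : ℝ) + 1) * θ) with hv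
    have hs0 : Real.sin ((0 : ℝ) * θ) = 0 := by rw [zero_mul, Real.sin_zero]
    have hsN : Real.sin ((((N : ℕ) : ℝ) + 1) * θ) = 0 := by
      have harg : (((N : ℕ) : ℝ) + 1) * θ = (((k : ℕ) + 1 : ℕ) : ℝ) * Real.pi := by
        rw [hθ]
        push_cast
        field_simp
      rw [harg, Real.sin_nat_mul_pi]
    have hvne : v ≠ 0 := by
      intro h0
      have h1 : v ⟨0, hN⟩ = 0 := by rw [h0]; rfl
      rw [hv] at h1
      simp only at h1
      have hθpos : 0 < θ := by rw [hθ]; positivity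
      have hθlt : θ < Real.pi := by
        rw [hθ, div_lt_iff₀ hNpos]
        have hk : ((k : ℕ) : ℝ) + 1 ≤ (N : ℝ) := by exact_mod_cast k.isLt
        nlinarith
      have := Real.sin_pos_of_pos_of_lt_pi hθpos hθlt
      rw [show (((0 : ℕ) : ℝ) + 1) * θ = θ by push_cast; ring] at h1
      linarith
    -- M applied to v
    have hw : ∀ i : Fin (N+1), M.mulVec v i
        = Mf * (Real.sin (((((i : ℕ) + 1 : ℕ)) : ℝ) * θ)
            - Real.sin ((((i : ℕ) : ℕ) : ℝ) * θ)) := by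
      intro i
      have hsplit : ∀ j : Fin N, M i j * v j =
          (if (j : ℕ) = (i : ℕ) then Mf * v j else 0)
            + (if (j : ℕ) + 1 = (i : ℕ) then (-Mf) * v j else 0) := by
        intro j
        rw [hM]
        by_cases h1 : (i : ℕ) = (j : ℕ)
        · rw [if_pos h1, if_pos h1.symm, if_neg (by omega), add_zero]
        · rw [if_neg h1]
          by_cases h2 : (i : ℕ) = (j : ℕ) + 1
          · rw [if_pos h2, if_neg (by omega), if_pos h2.symm, zero_add]
          · rw [if_neg h2, if_neg (by omega), if_neg (by omega), zero_mul, zero_add]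
      show (∑ j, M i j * v j) = _
      rw [Finset.sum_congr rfl fun j _ => hsplit j, Finset.sum_add_distrib,
        aux_sum_ite_eq, aux_sum_ite_eq']
      have hiN := i.isLt
      by_cases h1 : (i : ℕ) < N <;> by_cases h2 : 1 ≤ (i : ℕ)
      · rw [dif_pos h1, dif_pos ⟨by omega, h2⟩]
        rw [hv]
        simp only
        have e1 : (((⟨(i : ℕ), h1⟩ : Fin N) : ℕ) : ℝ) + 1 = (((i : ℕ) + 1 : ℕ) : ℝ) := by
          push_cast; ring
        have e2 : (((⟨(i : ℕ) - 1, by omega⟩ : Fin N) : ℕ) : ℝ) + 1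
            = (((i : ℕ) : ℕ) : ℝ) := by
          simp only [Fin.val_mk]
          have h3 : (i : ℕ) - 1 + 1 = (i : ℕ) := by omega
          exact_mod_cast congrArg (Nat.cast (R := ℝ)) h3
        rw [e1, e2]
        ring
      · have h0 : (i : ℕ) = 0 := by omega
        rw [dif_pos h1, dif_neg (by omega)]
        rw [hv]
        simp only
        have e1 : (((⟨(i : ℕ), h1⟩ : Fin N) : ℕ) : ℝ) + 1 = (((i : ℕ) + 1 : ℕ) : ℝ) := by
          push_cast; ring
        rw [e1, h0]
        push_cast
        rw [hs0]
        ring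
      · have h0 : (i : ℕ) = N := by omega
        rw [dif_neg h1, dif_pos ⟨by omega, h2⟩]
        rw [hv]
        simp only
        have e2 : (((⟨(i : ℕ) - 1, by omega⟩ : Fin N) : ℕ) : ℝ) + 1
            = (((i : ℕ) : ℕ) : ℝ) := by
          simp only [Fin.val_mk]
          have h3 : (i : ℕ) - 1 + 1 = (i : ℕ) := by omega
          exact_mod_cast congrArg (Nat.cast (R := ℝ)) h3
        rw [e2, h0]
        push_cast
        rw [hsN]
        ring
      · omega
    -- the eigenvalue equation
    have hAv : (Mᵀ * M).mulVec v = (2 * Mf ^ 2 * (1 - Real.cos θ)) • v := by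
      rw [← Matrix.mulVec_mulVec]
      set w := M.mulVec v with hwdef
      funext j
      have hjN := j.isLt
      have hsplit2 : ∀ i : Fin (N+1), Mᵀ j i * w i =
          (if (i : ℕ) = (j : ℕ) then Mf * w i else 0)
            + (if (i : ℕ) = (j : ℕ) + 1 then (-Mf) * w i else 0) := by
        intro i
        rw [Matrix.transpose_apply, hM]
        by_cases h1 : (i : ℕ) = (j : ℕ)
        · rw [if_pos h1, if_pos h1, if_neg (by omega), add_zero]
        · rw [if_neg h1, if_neg h1]
          by_cases h2 : (i : ℕ) = (j : ℕ) + 1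
          · rw [if_pos h2, if_pos h2, zero_add]
          · rw [if_neg h2, if_neg h2, zero_mul, zero_add]
      show (∑ i, Mᵀ j i * w i) = _
      rw [Finset.sum_congr rfl fun i _ => hsplit2 i, Finset.sum_add_distrib,
        aux_sum_ite_eq, aux_sum_ite_eq,
        dif_pos (show (j : ℕ) < N + 1 by omega),
        dif_pos (show (j : ℕ) + 1 < N + 1 by omega)]
      rw [hw, hw]
      simp only [Pi.smul_apply, smul_eq_mul]
      rw [hv]
      simp only
      have key := aux_trig_rec θ (((j : ℕ) : ℝ) + 1)
      push_cast
      push_cast at key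
      rw [show ((j : ℕ) : ℝ) + 1 - 1 = ((j : ℕ) : ℝ) by ring] at key
      linear_combination Mf ^ 2 * key
    have hroot := aux_charpoly_root (Mᵀ * M) (2 * Mf ^ 2 * (1 - Real.cos θ)) v hvne hAv
    rwa [hr_eq]
  -- assemble
  have hmonic := (Mᵀ * M).charpoly_monic
  have hdeg : (Mᵀ * M).charpoly.natDegree = N := by
    rw [Matrix.charpoly_natDegree_eq_dim, Fintype.card_fin]
  have key := aux_monic_eq_prod (Mᵀ * M).charpoly hmonic hdeg r hinj hroots
  refine ⟨key, key.trans (Finset.prod_congr rfl fun k _ => ?_)⟩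
  congr 2
  rw [mul_pow, mul_pow, sq_abs]
  ring
end
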